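/- Gaussian truncation error bound: for τ > 0 and x ∈ [0, 2π), approximating ∑_{m=0}^{2N−1} f(πm/N) exp(−(x − πm/N)²/(4τ)) by the sum over only those m with |m − m_x| ≤ M_sp (where m_x = ⌊Nx/π⌋) incurs an error bounded by ‖f‖_∞ · ∑_{j > M_sp} 2 exp(−(π(j−1)/N)²/(4τ)). -/
import Mathlib

open Real

theorem stmt_17 (N M_sp : ℕ) (hN : 0 < N) (hM : 0 < M_sp) (τ : ℝ) (hτ : 0 < τ)
    (x : ℝ) (hx : x ∈ Set.Ico (0 : ℝ) (2 * π))
    (f : ℕ → ℝ) (C : ℝ) (hC : 0 ≤ C) (hf : ∀ m, |f m| ≤ C) :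
    |(∑ m ∈ Finset.range (2 * N), f m * Real.exp (-(x - π * m / N) ^ 2 / (4 * τ))) -
        ∑ m ∈ (Finset.range (2 * N)).filter
            (fun m : ℕ => |(m : ℤ) - ⌊(N : ℝ) * x / π⌋| ≤ (M_sp : ℤ)),
          f m * Real.exp (-(x - π * m / N) ^ 2 / (4 * τ))| ≤
      C * ∑' j : ℕ, 2 * Real.exp (-(π * ((M_sp : ℝ) + j) / N) ^ 2 / (4 * τ)) := by
  have hπ : (0:ℝ) < π := pi_pos
  have hNR : (0:ℝ) < (N:ℝ) := by exact_mod_cast hN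
  set K : ℤ := ⌊(N : ℝ) * x / π⌋ with hK
  set e : ℕ → ℝ := fun m => Real.exp (-(x - π * m / N) ^ 2 / (4 * τ)) with he
  set E : ℕ → ℝ := fun j => Real.exp (-(π * ((M_sp:ℝ) + j) / N) ^ 2 / (4 * τ)) with hE
  have hEpos : ∀ j, 0 < E j := fun j => Real.exp_pos _
  -- summability of E
  have hsum : Summable E := by
    set c : ℝ := π^2 / (N^2 * (4*τ)) with hc
    have hc0 : 0 < c := by positivity
    have hr1 : Real.exp (-c) < 1 := by
      rw [Real.exp_lt_one_iff]; linarith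
    have hr0 : 0 ≤ Real.exp (-c) := (Real.exp_pos _).le
    have hg : Summable (fun j : ℕ => Real.exp (-c) ^ M_sp * Real.exp (-c) ^ j) :=
      (summable_geometric_of_lt_one hr0 hr1).mul_left _
    refine Summable.of_nonneg_of_le (fun j => (hEpos j).le) (fun j => ?_) hg
    have h1 : Real.exp (-c) ^ M_sp * Real.exp (-c) ^ j = Real.exp (-(c * (M_sp + j))) := by
      rw [← pow_add, ← Real.exp_nat_mul]
      push_cast
      ring_nf
    rw [hE, h1]
    apply Real.exp_le_exp.mpr
    have hMj : (1:ℝ) ≤ (M_sp:ℝ) + j := by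
      have h2 : (1:ℝ) ≤ (M_sp:ℝ) := by exact_mod_cast hM
      have h3 : (0:ℝ) ≤ (j:ℝ) := Nat.cast_nonneg _
      linarith
    have heq : (π * ((M_sp:ℝ) + j) / N) ^ 2 / (4*τ) = c * ((M_sp:ℝ)+j)^2 := by
      rw [hc]; field_simp
    have hsq : c * ((M_sp:ℝ) + j) ≤ (π * ((M_sp:ℝ) + j) / N) ^ 2 / (4*τ) := by
      rw [heq]
      have h4 : (M_sp:ℝ) + j ≤ ((M_sp:ℝ)+j)^2 := by nlinarith
      nlinarith
    rw [neg_div]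
    linarith
  have hsum2 : Summable (fun j => 2 * E j) := hsum.mul_left 2
  -- split the sum
  set P : ℕ → Prop := fun m => |(m : ℤ) - K| ≤ (M_sp : ℤ) with hP
  set S : Finset ℕ := (Finset.range (2*N)).filter (fun m => ¬ P m) with hS
  have hsplit : (∑ m ∈ Finset.range (2 * N), f m * e m) -
      (∑ m ∈ (Finset.range (2 * N)).filter (fun m : ℕ => P m), f m * e m)
      = ∑ m ∈ S, f m * e m := by
    rw [← Finset.sum_filter_add_sum_filter_not (Finset.range (2*N)) P (fun m => f m * e m)]
    ring
  rw [hsplit]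
  -- pointwise key bound
  have key : ∀ m ∈ S, e m ≤ E ((|(m:ℤ) - K|).toNat - (M_sp + 1)) := by
    intro m hm
    rw [hS, Finset.mem_filter] at hm
    have hgt : (M_sp : ℤ) < |(m:ℤ) - K| := by
      have h5 := hm.2
      rw [hP] at h5
      omega
    set v : ℤ := |(m:ℤ) - K| with hv
    have hv0 : 0 ≤ v := abs_nonneg _
    have hvM : (M_sp:ℤ) + 1 ≤ v := by omega
    have hcast : ((M_sp:ℝ) + ((v.toNat - (M_sp+1) : ℕ) : ℝ)) = (v:ℝ) - 1 := by
      have h6 : ((v.toNat - (M_sp+1) : ℕ) : ℤ) = v - ((M_sp:ℤ) + 1) := by omega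
      have h2 : ((v.toNat - (M_sp+1) : ℕ) : ℝ) = ((v:ℝ) - ((M_sp:ℝ) + 1)) := by
        exact_mod_cast congrArg (fun z : ℤ => (z:ℝ)) h6
      rw [h2]; ring
    rw [hE, he]
    simp only
    rw [hcast]
    apply Real.exp_le_exp.mpr
    rw [div_le_div_iff₀ (by positivity) (by positivity)]
    have hv1 : (1:ℝ) ≤ (v:ℝ) := by exact_mod_cast (by omega : (1:ℤ) ≤ v)
    have hineq : π * ((v:ℝ) - 1) / N ≤ |x - π * m / N| := by
      set y : ℝ := (N:ℝ) * x / π with hy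
      have h1 : (K:ℝ) ≤ y := Int.floor_le _
      have h2 : y < (K:ℝ) + 1 := Int.lt_floor_add_one _
      have hxy : x = π * y / N := by rw [hy]; field_simp
      have habs : |x - π * m / N| = (π / N) * |y - m| := by
        rw [hxy, ← abs_of_pos (show (0:ℝ) < π/N by positivity), ← abs_mul]
        congr 1; field_simp
      have hvr : (v:ℝ) = |(m:ℝ) - (K:ℝ)| := by
        rw [hv]; push_cast; ring
      have htri : (v:ℝ) - 1 ≤ |y - m| := by
        have h7 : |(m:ℝ) - K| ≤ |(m:ℝ) - y| + |y - K| := abs_sub_le _ _ _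
        have hyK : |y - (K:ℝ)| ≤ 1 := by rw [abs_le]; constructor <;> linarith
        have h8 : |(m:ℝ) - y| = |y - (m:ℝ)| := abs_sub_comm _ _
        rw [hvr]
        linarith
      rw [habs]
      rw [div_mul_eq_mul_div, div_le_div_iff₀ (by positivity) (by positivity)]
      nlinarith [mul_le_mul_of_nonneg_left htri (mul_pos hπ hNR).le]
    have h0 : 0 ≤ π * ((v:ℝ) - 1) / N := by
      apply div_nonneg _ hNR.le
      nlinarith
    nlinarith [abs_nonneg (x - π * m / N), sq_abs (x - π * m / N),
      mul_self_le_mul_self h0 hineq]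
  -- bound |sum| and reduce
  have habs1 : |∑ m ∈ S, f m * e m| ≤ ∑ m ∈ S, C * e m := by
    refine (Finset.abs_sum_le_sum_abs _ _).trans (Finset.sum_le_sum fun m hm => ?_)
    have hepos : 0 < e m := Real.exp_pos _
    rw [abs_mul, abs_of_pos hepos]
    exact mul_le_mul_of_nonneg_right (hf m) hepos.le
  refine habs1.trans ?_
  rw [← Finset.mul_sum]
  apply mul_le_mul_of_nonneg_left _ hC
  -- fiberwise bound
  set d : ℕ → ℕ := fun m => (|(m:ℤ) - K|).toNat - (M_sp + 1) with hd
  have hfib : ∑ m ∈ S, e m = ∑ j ∈ S.image d, ∑ m ∈ S.filter (fun m => d m = j), e m :=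
    (Finset.sum_fiberwise_of_maps_to (fun m hm => Finset.mem_image_of_mem d hm) _).symm
  rw [hfib]
  have hcard : ∀ j ∈ S.image d, ∑ m ∈ S.filter (fun m => d m = j), e m ≤ 2 * E j := by
    intro j _
    have hle : ∑ m ∈ S.filter (fun m => d m = j), e m
        ≤ (S.filter (fun m => d m = j)).card • E j := by
      apply Finset.sum_le_card_nsmul
      intro m hm
      rw [Finset.mem_filter] at hm
      have h9 := key m hm.1
      rw [hd] at hm
      rw [← hm.2]
      exact h9
    refine hle.trans ?_
    rw [nsmul_eq_mul]
    apply mul_le_mul_of_nonneg_right _ (hEpos j).le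
    have hsub : S.filter (fun m => d m = j) ⊆
        {(K + ((M_sp:ℤ) + 1 + j)).toNat, (K - ((M_sp:ℤ) + 1 + j)).toNat} := by
      intro m hm
      rw [Finset.mem_filter] at hm
      obtain ⟨hmS, hmd⟩ := hm
      rw [hS, Finset.mem_filter, hP] at hmS
      have hmS2 := hmS.2
      rw [hd] at hmd
      simp only [Int.abs_eq_natAbs] at hmS2 hmd
      simp only [Finset.mem_insert, Finset.mem_singleton]
      omega
    calc ((S.filter (fun m => d m = j)).card : ℝ)
        ≤ ((({(K + ((M_sp:ℤ) + 1 + j)).toNat, (K - ((M_sp:ℤ) + 1 + j)).toNat} : Finset ℕ)).card : ℝ) := by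
          exact_mod_cast Finset.card_le_card hsub
      _ ≤ 2 := by exact_mod_cast (Finset.card_insert_le _ _).trans (by simp)
  calc ∑ j ∈ S.image d, ∑ m ∈ S.filter (fun m => d m = j), e m
      ≤ ∑ j ∈ S.image d, 2 * E j := Finset.sum_le_sum hcard
    _ ≤ ∑' j, 2 * E j := Summable.sum_le_tsum _ (fun j _ => by positivity) hsum2
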